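/- Let Ω ⊆ ℝⁿ be a nonempty closed convex set, F : ℝⁿ → ℝⁿ continuous and monotone on Ω and coercive with respect to Ω, and let φ : ℝⁿ → ℝ ∪ {+∞} be convex with effective domain Ω and continuous on Ω, with 0 ∈ ri(dom ∂φ − Ω), S₀ nonempty and closed, and 0 ∈ ri(dom ∂φ − S₀). Suppose the solution set S₀ is weakly sharp of order γ > 1 with sharpness constant α > 0, i.e., G(x) ≥ α · d(x, S₀)^γ for all x ∈ Ω. Then there exists τ > 0 such that for all ε > 0 and all x_ε ∈ S_{Gεφ}, d(x_ε, S₀)^{γ−1} ≤ τ ε. In particular, S_{Gεφ} is bounded for each ε > 0. -/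

import Mathlib

/-!
Let `x̄` minimize `φ` over `S₀`, which is compact (bounded by coercivity) and convex (Minty's
lemma). Separating the epigraph of `φ` from `S₀ × (-∞, φ x̄]`, the two relative-interior
conditions rule out a vertical hyperplane and yield a subgradient `g` of `φ` at `x̄` with
`⟨g, s - x̄⟩ ≥ 0` on `S₀`. As `G` vanishes on `S₀`, minimality of `x_ε` and weak sharpness give
`α d^γ ≤ ε (φ x̄ - φ x_ε) ≤ ε ‖g‖ d` with `d = d(x_ε, S₀)`, hence `d^(γ-1) ≤ (‖g‖ / α) ε`;
so `S_{Gεφ}` lies within a fixed distance of the bounded set `S₀`.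
-/

open Set Pointwise
open scoped InnerProductSpace

/-- The dual gap function `G(x) = sup_{y ∈ Ω} ⟨F(y), x − y⟩`, valued in `EReal`. -/
noncomputable def dualGap {n : ℕ} (Ω : Set (EuclideanSpace ℝ (Fin n)))
    (F : EuclideanSpace ℝ (Fin n) → EuclideanSpace ℝ (Fin n))
    (x : EuclideanSpace ℝ (Fin n)) : EReal :=
  ⨆ y ∈ Ω, ((⟪F y, x - y⟫_ℝ : ℝ) : EReal)

/-- The (convex) subdifferential of φ (viewed as the extended function equal to φ on
Ω and +∞ outside of Ω, so that its effective domain is Ω). -/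
def subdiffOn {n : ℕ} (Ω : Set (EuclideanSpace ℝ (Fin n)))
    (φ : EuclideanSpace ℝ (Fin n) → ℝ) (x : EuclideanSpace ℝ (Fin n)) :
    Set (EuclideanSpace ℝ (Fin n)) :=
  {v | x ∈ Ω ∧ ∀ y ∈ Ω, φ x + ⟪v, y - x⟫_ℝ ≤ φ y}

open Filter Topology Metric Bornology

section RelativeInterior

variable {E : Type*} [NormedAddCommGroup E] [NormedSpace ℝ E]

theorem ContinuousLinearMap.eq_zero_of_nonpos_of_zero_mem_intrinsicInterior {M : Set E}
    (f : E →L[ℝ] ℝ) (h0 : (0 : E) ∈ intrinsicInterior ℝ M) (hle : ∀ m ∈ M, f m ≤ 0) :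
    ∀ m ∈ M, f m = 0 := by
  intro m hm
  obtain ⟨q, hq, hq0⟩ := mem_intrinsicInterior.1 h0
  have h0M : (0 : E) ∈ affineSpan ℝ M := hq0 ▸ q.2
  have hline : ∀ t : ℝ, t • m ∈ affineSpan ℝ M := fun t => by
    simpa using (affineSpan ℝ M).smul_vsub_vadd_mem t (subset_affineSpan ℝ M hm) h0M h0M
  let c : ℝ → affineSpan ℝ M := fun t => ⟨t • m, hline t⟩
  have hc0 : c 0 = q := Subtype.ext (by simp [c, hq0])
  have hc : Continuous c := (continuous_id.smul continuous_const).subtype_mk hline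
  have hnear : ∀ᶠ t in 𝓝 (0 : ℝ), c t ∈ interior (((↑) : affineSpan ℝ M → E) ⁻¹' M) :=
    (hc.tendsto 0).eventually (by rw [hc0]; exact isOpen_interior.mem_nhds hq)
  obtain ⟨t, htM, ht⟩ :=
    ((hnear.filter_mono nhdsWithin_le_nhds).and (self_mem_nhdsWithin (s := Iio 0))).exists
  have hneg := hle (t • m) (interior_subset (s := ((↑) : affineSpan ℝ M → E) ⁻¹' M) htM)
  rw [map_smul, smul_eq_mul] at hneg
  exact le_antisymm (hle m hm) (nonneg_of_mul_nonpos_right hneg ht)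

theorem ContinuousLinearMap.eqOn_of_zero_mem_intrinsicInterior_sub {D Ω S : Set E}
    (f : E →L[ℝ] ℝ) {c : ℝ} (hDΩ : D ⊆ Ω) (hΩ : ∀ x ∈ Ω, f x ≤ c) (hS : ∀ s ∈ S, c ≤ f s)
    (hriΩ : (0 : E) ∈ intrinsicInterior ℝ (D - Ω))
    (hriS : (0 : E) ∈ intrinsicInterior ℝ (D - S)) :
    ∀ x ∈ Ω, f x = c := by
  obtain ⟨d₀, hd₀, s₀, hs₀, -⟩ := intrinsicInterior_subset hriS
  have hD : ∀ d ∈ D, f d = c := by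
    have hzero := f.eq_zero_of_nonpos_of_zero_mem_intrinsicInterior hriS <| by
      rintro _ ⟨d, hd, s, hs, rfl⟩
      linarith [map_sub f d s, hΩ d (hDΩ hd), hS s hs]
    intro d hd
    linarith [hzero _ ⟨d, hd, s₀, hs₀, rfl⟩, map_sub f d s₀, hΩ d (hDΩ hd), hS s₀ hs₀]
  have hzero := (-f).eq_zero_of_nonpos_of_zero_mem_intrinsicInterior hriΩ <| by
    rintro _ ⟨d, hd, x, hx, rfl⟩
    simp only [neg_apply, map_sub, hD d hd]
    linarith [hΩ x hx]
  intro x hx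
  have := hzero _ ⟨d₀, hd₀, x, hx, rfl⟩
  simp only [neg_apply, map_sub, hD d₀ hd₀] at this
  linarith

end RelativeInterior

section Separation

variable {E : Type*} [NormedAddCommGroup E] [InnerProductSpace ℝ E] [FiniteDimensional ℝ E]
  {Ω K : Set E} {φ : E → ℝ} {xb : E}

theorem exists_separation_epigraph_of_isMinOn (hΩ : Convex ℝ Ω) (hK : Convex ℝ K)
    (hKΩ : K ⊆ Ω) (hφconv : ConvexOn ℝ Ω φ) (hφcont : ContinuousOn φ Ω) (hxb : xb ∈ K)
    (hmin : IsMinOn φ K xb) :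
    ∃ (f : E →L[ℝ] ℝ) (β u : ℝ), (∀ x ∈ Ω, ∀ t, φ x ≤ t → f x + β * t ≤ u) ∧
      (∀ s ∈ K, u ≤ f s + β * φ xb) ∧ ∃ w ∈ Ω, f w + β * (φ w + 1) < u := by
  have : Nonempty (affineSpan ℝ Ω) := ⟨⟨xb, subset_affineSpan ℝ Ω (hKΩ hxb)⟩⟩
  let π := EuclideanGeometry.orthogonalProjection (affineSpan ℝ Ω)
  let ρ : E →ᵃ[ℝ] E := (affineSpan ℝ Ω).subtype.comp π.toAffineMap
  have hρ : ∀ x ∈ Ω, ρ x = x := fun x hx =>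
    EuclideanGeometry.orthogonalProjection_eq_self_iff.2 (subset_affineSpan ℝ Ω hx)
  -- pulled back along `ρ`, the epigraph gets nonempty interior, so Hahn–Banach applies
  let s : Set (E × ℝ) := {p | ρ p.1 ∈ Ω ∧ φ (ρ p.1) ≤ p.2}
  have hs : Convex ℝ s := by
    rintro ⟨x, t⟩ ⟨hx, hxt⟩ ⟨y, r⟩ ⟨hy, hyr⟩ a b ha hb hab
    have hxt' : (ρ x, t) ∈ {p : E × ℝ | p.1 ∈ Ω ∧ φ p.1 ≤ p.2} := ⟨hx, hxt⟩
    have hyr' : (ρ y, r) ∈ {p : E × ℝ | p.1 ∈ Ω ∧ φ p.1 ≤ p.2} := ⟨hy, hyr⟩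
    simpa [s, Convex.combo_affine_apply hab] using
      hφconv.convex_epigraph hxt' hyr' ha hb hab
  have hdisj : Disjoint (interior s) (K ×ˢ Iic (φ xb)) := by
    refine disjoint_left.2 fun ⟨x, t⟩ hint ⟨hxK, hxt⟩ => ?_
    have hnear : ∀ᶠ r in 𝓝 (0 : ℝ), (x, t - r) ∈ s :=
      (continuous_const.prodMk (continuous_const.sub continuous_id)).tendsto' 0 (x, t)
        (by simp) |>.eventually (mem_interior_iff_mem_nhds.1 hint)
    obtain ⟨r, ⟨-, hr⟩, hr0⟩ :=
      ((hnear.filter_mono nhdsWithin_le_nhds).and (self_mem_nhdsWithin (s := Ioi 0))).exists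
    rw [hρ x (hKΩ hxK)] at hr
    linarith [show φ xb ≤ φ x from hmin hxK, show φ x ≤ t - r from hr,
      show t ≤ φ xb from hxt]
  obtain ⟨w, hw⟩ := Set.Nonempty.intrinsicInterior hΩ ⟨xb, hKΩ hxb⟩
  have hwint : (w, φ w + 1) ∈ interior s := by
    obtain ⟨q, hq, rfl⟩ := mem_intrinsicInterior.1 hw
    let Ω' : Set (affineSpan ℝ Ω) := (↑) ⁻¹' Ω
    have hπ : Continuous fun p : E × ℝ => π p.1 := π.continuous.comp continuous_fst
    let O := (fun p : E × ℝ => π p.1) ⁻¹' interior Ω'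
    have hO : IsOpen (O ∩ (fun p : E × ℝ => p.2 - φ (ρ p.1)) ⁻¹' Ioi 0) := by
      refine ContinuousOn.isOpen_inter_preimage ?_ (isOpen_interior.preimage hπ) isOpen_Ioi
      exact continuous_snd.continuousOn.sub (hφcont.comp
        (continuous_subtype_val.comp hπ).continuousOn fun p hp => interior_subset (s := Ω') hp)
    refine interior_maximal (fun p hp => show ρ p.1 ∈ Ω ∧ φ (ρ p.1) ≤ p.2 from
      ⟨interior_subset (s := Ω') hp.1, (sub_pos.1 hp.2).le⟩) hO ⟨?_, ?_⟩
    · show π q ∈ interior Ω'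
      rwa [EuclideanGeometry.orthogonalProjection_mem_subspace_eq_self]
    · show (0 : ℝ) < φ q + 1 - φ (ρ q)
      rw [hρ q (interior_subset (s := Ω') hq)]
      norm_num
  obtain ⟨F, u, hlt, hge⟩ :=
    geometric_hahn_banach_open hs.interior isOpen_interior (hK.prod (convex_Iic _)) hdisj
  have hle : ∀ p ∈ s, F p ≤ u := fun p hp =>
    closure_minimal (fun p hp => (hlt p hp).le) (isClosed_Iic.preimage F.continuous)
      (hs.closure_interior_eq_closure_of_nonempty_interior ⟨_, hwint⟩ ▸ subset_closure hp)
  have hF : ∀ x t, F (x, t) = F.comp (.inl ℝ E ℝ) x + F (0, 1) * t := fun x t => by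
    conv_lhs => rw [show (x, t) = (x, 0) + t • ((0 : E), (1 : ℝ)) by simp]
    rw [map_add, map_smul, smul_eq_mul, mul_comm]
    rfl
  refine ⟨F.comp (.inl ℝ E ℝ), F (0, 1), u, fun x hx t ht => ?_, fun k hk => ?_,
    w, intrinsicInterior_subset hw, ?_⟩
  · rw [← hF]
    exact hle (x, t) ⟨(hρ x hx).symm ▸ hx, (hρ x hx).symm ▸ ht⟩
  · rw [← hF]
    exact hge (k, φ xb) ⟨hk, mem_Iic.2 le_rfl⟩
  · rw [← hF]
    exact hlt _ hwint

theorem exists_subgradient_of_isMinOn_of_zero_mem_intrinsicInterior {D : Set E}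
    (hΩ : Convex ℝ Ω) (hK : Convex ℝ K) (hKΩ : K ⊆ Ω) (hφconv : ConvexOn ℝ Ω φ)
    (hφcont : ContinuousOn φ Ω) (hxb : xb ∈ K) (hmin : IsMinOn φ K xb) (hDΩ : D ⊆ Ω)
    (hriΩ : (0 : E) ∈ intrinsicInterior ℝ (D - Ω))
    (hriK : (0 : E) ∈ intrinsicInterior ℝ (D - K)) :
    ∃ g : E →L[ℝ] ℝ, (∀ x ∈ Ω, φ xb + g (x - xb) ≤ φ x) ∧ ∀ s ∈ K, 0 ≤ g (s - xb) := by
  obtain ⟨f, β, u, hfΩ, hfK, w, hw, hfw⟩ :=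
    exists_separation_epigraph_of_isMinOn hΩ hK hKΩ hφconv hφcont hxb hmin
  have hu : u = f xb + β * φ xb := le_antisymm (hfK xb hxb) (hfΩ xb (hKΩ hxb) _ le_rfl)
  have hβ : β < 0 := by
    rcases lt_trichotomy β 0 with hβ | rfl | hβ
    · exact hβ
    · -- the constraint qualifications force a vertical hyperplane to be constant on `Ω`
      have := f.eqOn_of_zero_mem_intrinsicInterior_sub hDΩ
        (fun x hx => by simpa using hfΩ x hx _ le_rfl) (fun s hs => by simpa using hfK s hs)
        hriΩ hriK w hw
      simp only [zero_mul, add_zero] at hfw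
      linarith
    · linarith [hfΩ xb (hKΩ hxb) (φ xb + 1) (by linarith)]
  refine ⟨(-β)⁻¹ • f, fun x hx => ?_, fun s hs => ?_⟩
  · have := hfΩ x hx _ le_rfl
    rw [smul_apply, smul_eq_mul, map_sub, ← le_sub_iff_add_le',
      inv_mul_le_iff₀ (neg_pos.2 hβ)]
    linarith
  · have := hfK s hs
    rw [smul_apply, smul_eq_mul, map_sub]
    exact mul_nonneg (inv_nonneg.2 (neg_nonneg.2 hβ.le)) (by linarith)

end Separation

section VariationalInequality

variable {E : Type*} [NormedAddCommGroup E] [InnerProductSpace ℝ E] {Ω : Set E} {F : E → E}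

def viSolutionSet (Ω : Set E) (F : E → E) : Set E :=
  {x | x ∈ Ω ∧ ∀ y ∈ Ω, 0 ≤ ⟪F x, y - x⟫_ℝ}

def mintySolutionSet (Ω : Set E) (F : E → E) : Set E :=
  {x | x ∈ Ω ∧ ∀ y ∈ Ω, 0 ≤ ⟪F y, y - x⟫_ℝ}

theorem viSolutionSet_subset_mintySolutionSet
    (hF : ∀ x ∈ Ω, ∀ y ∈ Ω, 0 ≤ ⟪F x - F y, x - y⟫_ℝ) :
    viSolutionSet Ω F ⊆ mintySolutionSet Ω F := fun x ⟨hx, hxF⟩ =>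
  ⟨hx, fun y hy => by
    linarith [hF y hy x hx, inner_sub_left (𝕜 := ℝ) (F y) (F x) (y - x), hxF y hy]⟩

theorem mintySolutionSet_subset_viSolutionSet (hΩ : Convex ℝ Ω) (hF : ContinuousOn F Ω) :
    mintySolutionSet Ω F ⊆ viSolutionSet Ω F := by
  rintro x ⟨hx, hxF⟩
  refine ⟨hx, fun y hy => ?_⟩
  have hseg : ∀ t ∈ Ioc (0 : ℝ) 1, x + t • (y - x) ∈ Ω := fun t ht =>
    hΩ.add_smul_sub_mem hx hy ⟨ht.1.le, ht.2⟩
  have hnonneg : ∀ t ∈ Ioc (0 : ℝ) 1, 0 ≤ ⟪F (x + t • (y - x)), y - x⟫_ℝ := fun t ht => by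
    have := hxF _ (hseg t ht)
    rw [add_sub_cancel_left, real_inner_smul_right] at this
    exact nonneg_of_mul_nonneg_right this ht.1
  have hlim : Tendsto (fun t : ℝ => x + t • (y - x)) (𝓝[>] 0) (𝓝[Ω] x) := by
    refine tendsto_nhdsWithin_iff.2 ⟨?_, ?_⟩
    · exact (Continuous.tendsto' (f := fun t : ℝ => x + t • (y - x)) (by fun_prop) 0 x
        (by simp)).mono_left nhdsWithin_le_nhds
    · filter_upwards [Ioc_mem_nhdsGT zero_lt_one] using hseg
  exact ge_of_tendsto (((hF x hx).tendsto.comp hlim).inner tendsto_const_nhds)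
    (Filter.mem_of_superset (Ioc_mem_nhdsGT zero_lt_one) hnonneg)

theorem convex_mintySolutionSet (hΩ : Convex ℝ Ω) : Convex ℝ (mintySolutionSet Ω F) := by
  rintro x₁ ⟨h₁, hx₁⟩ x₂ ⟨h₂, hx₂⟩ a b ha hb hab
  refine ⟨hΩ h₁ h₂ ha hb hab, fun y hy => ?_⟩
  have hyx : y - (a • x₁ + b • x₂) = a • (y - x₁) + b • (y - x₂) := by
    linear_combination (norm := module) -(hab • y)
  rw [hyx, inner_add_right, real_inner_smul_right, real_inner_smul_right]
  exact add_nonneg (mul_nonneg ha (hx₁ y hy)) (mul_nonneg hb (hx₂ y hy))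

theorem convex_viSolutionSet (hΩ : Convex ℝ Ω) (hFcont : ContinuousOn F Ω)
    (hFmono : ∀ x ∈ Ω, ∀ y ∈ Ω, 0 ≤ ⟪F x - F y, x - y⟫_ℝ) :
    Convex ℝ (viSolutionSet Ω F) := by
  rw [(viSolutionSet_subset_mintySolutionSet hFmono).antisymm
    (mintySolutionSet_subset_viSolutionSet hΩ hFcont)]
  exact convex_mintySolutionSet hΩ

theorem isBounded_viSolutionSet_of_coercive {x₀ : E} {c γ' R : ℝ} (hx₀ : x₀ ∈ Ω) (hc : 0 < c)
    (hR : ∀ x ∈ Ω, R ≤ ‖x‖ → c ≤ ⟪F x, x - x₀⟫_ℝ / ‖x‖ ^ γ') :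
    IsBounded (viSolutionSet Ω F) := by
  refine (isBounded_ball (x := 0) (r := R)).subset fun x ⟨hx, hxF⟩ => ?_
  rw [mem_ball_zero_iff]
  by_contra! hxR
  have hF : ⟪F x, x - x₀⟫_ℝ ≤ 0 := by
    have := hxF x₀ hx₀
    rwa [← neg_sub, inner_neg_right, neg_nonneg] at this
  linarith [hR x hx hxR, div_nonpos_of_nonpos_of_nonneg hF (by positivity : 0 ≤ ‖x‖ ^ γ')]

end VariationalInequality

theorem dualGap_eq_zero_of_mem_mintySolutionSet {n : ℕ} {Ω : Set (EuclideanSpace ℝ (Fin n))}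
    {F : EuclideanSpace ℝ (Fin n) → EuclideanSpace ℝ (Fin n)} {x : EuclideanSpace ℝ (Fin n)}
    (hx : x ∈ mintySolutionSet Ω F) : dualGap Ω F x = 0 := by
  refine le_antisymm (iSup₂_le fun y hy => ?_) (le_iSup₂_of_le x hx.1 (by simp))
  have := hx.2 y hy
  rw [← neg_sub, inner_neg_right] at this
  exact_mod_cast (neg_nonneg.1 this)

theorem sub_le_norm_mul_infDist {E : Type*} [NormedAddCommGroup E] [NormedSpace ℝ E]
    [ProperSpace E] {K : Set E} {φ : E → ℝ} {g : E →L[ℝ] ℝ} {xb x : E} (hK : IsClosed K)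
    (hKne : K.Nonempty) (hgx : φ xb + g (x - xb) ≤ φ x) (hgK : ∀ s ∈ K, 0 ≤ g (s - xb)) :
    φ xb - φ x ≤ ‖g‖ * infDist x K := by
  obtain ⟨s, hs, hxs⟩ := hK.exists_infDist_eq_dist hKne x
  calc φ xb - φ x ≤ g (s - xb) - g (x - xb) := by linarith [hgK s hs]
    _ = g (s - x) := by rw [← map_sub, sub_sub_sub_cancel_right]
    _ ≤ ‖g‖ * ‖s - x‖ := (le_abs_self _).trans (g.le_opNorm _)
    _ = ‖g‖ * infDist x K := by rw [hxs, dist_comm, dist_eq_norm]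

theorem rpow_sub_one_le_of_mul_rpow_le {α γ d L ε : ℝ} (hα : 0 < α) (hγ : 1 < γ) (hd : 0 ≤ d)
    (hL : 0 ≤ L) (hε : 0 ≤ ε) (h : α * d ^ γ ≤ ε * (L * d)) : d ^ (γ - 1) ≤ L / α * ε := by
  rcases hd.eq_or_lt with rfl | hd
  · rw [Real.zero_rpow (by linarith)]
    positivity
  have hsplit : d ^ γ = d ^ (γ - 1) * d := by rw [← Real.rpow_add_one hd.ne', sub_add_cancel]
  rw [div_mul_eq_mul_div, le_div_iff₀ hα]
  exact le_of_mul_le_mul_right (by rw [hsplit] at h; linarith) hd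

theorem isBounded_of_forall_infDist_rpow_le {X : Type*} [PseudoMetricSpace X] {S T : Set X}
    (hS : IsBounded S) (hSne : S.Nonempty) {p c : ℝ} (hp : 0 < p)
    (h : ∀ x ∈ T, infDist x S ^ p ≤ c) : IsBounded T := by
  refine (hS.thickening (δ := c ^ p⁻¹ + 1)).subset fun x hx => ?_
  have hc : 0 ≤ c := (Real.rpow_nonneg infDist_nonneg p).trans (h x hx)
  rw [mem_thickening_iff_infDist_lt hSne]
  linarith [(Real.le_rpow_inv_iff_of_pos infDist_nonneg hc hp).2 (h x hx)]

theorem error_bound_for_regularized_dual_gap_general {n : ℕ}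
    (Ω : Set (EuclideanSpace ℝ (Fin n)))
    (hconv : Convex ℝ Ω)
    (F : EuclideanSpace ℝ (Fin n) → EuclideanSpace ℝ (Fin n))
    (hFcont : ContinuousOn F Ω)
    (hFmono : ∀ x ∈ Ω, ∀ y ∈ Ω, 0 ≤ ⟪F x - F y, x - y⟫_ℝ)
    (hcoer : ∃ γ' : ℝ, 0 < γ' ∧ ∀ x₀ ∈ Ω, ∃ c : ℝ, 0 < c ∧ ∃ R : ℝ,
      ∀ x ∈ Ω, R ≤ ‖x‖ → c ≤ ⟪F x, x - x₀⟫_ℝ / ‖x‖ ^ γ')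
    (φ : EuclideanSpace ℝ (Fin n) → ℝ)
    (hφconv : ConvexOn ℝ Ω φ) (hφcont : ContinuousOn φ Ω)
    (hri : (0 : EuclideanSpace ℝ (Fin n)) ∈
      intrinsicInterior ℝ ({x | (subdiffOn Ω φ x).Nonempty} - Ω))
    (hS0ne : ({x | x ∈ Ω ∧ ∀ y ∈ Ω, 0 ≤ ⟪F x, y - x⟫_ℝ}).Nonempty)
    (hS0cl : IsClosed {x : (EuclideanSpace ℝ (Fin n)) |
      x ∈ Ω ∧ ∀ y ∈ Ω, 0 ≤ ⟪F x, y - x⟫_ℝ})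
    (hriS0 : (0 : EuclideanSpace ℝ (Fin n)) ∈
      intrinsicInterior ℝ ({x | (subdiffOn Ω φ x).Nonempty} -
        {x | x ∈ Ω ∧ ∀ y ∈ Ω, 0 ≤ ⟪F x, y - x⟫_ℝ}))
    (γ α : ℝ) (hγ : 1 < γ) (hα : 0 < α)
    -- weak sharpness of order γ: G(x) ≥ α d(x, S₀)^γ on Ω
    (hsharp : ∀ x ∈ Ω,
      ((α * Metric.infDist x {x | x ∈ Ω ∧ ∀ y ∈ Ω, 0 ≤ ⟪F x, y - x⟫_ℝ} ^ γ : ℝ) :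
        EReal) ≤ dualGap Ω F x) :
    (∃ τ : ℝ, 0 < τ ∧ ∀ ε : ℝ, 0 < ε →
      ∀ xe ∈ {x | x ∈ Ω ∧ ∀ z ∈ Ω, dualGap Ω F x + ((ε * φ x : ℝ) : EReal) ≤
          dualGap Ω F z + ((ε * φ z : ℝ) : EReal)},
        Metric.infDist xe {x | x ∈ Ω ∧ ∀ y ∈ Ω, 0 ≤ ⟪F x, y - x⟫_ℝ} ^ (γ - 1)
          ≤ τ * ε) ∧
    (∀ ε : ℝ, 0 < ε →
      Bornology.IsBounded
        {x | x ∈ Ω ∧ ∀ z ∈ Ω, dualGap Ω F x + ((ε * φ x : ℝ) : EReal) ≤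
          dualGap Ω F z + ((ε * φ z : ℝ) : EReal)}) := by
  obtain ⟨γ', -, hcoer⟩ := hcoer
  obtain ⟨x₀, hx₀⟩ := hS0ne
  obtain ⟨c, hc, R, hR⟩ := hcoer x₀ hx₀.1
  have hS₀bdd : IsBounded (viSolutionSet Ω F) := isBounded_viSolutionSet_of_coercive hx₀.1 hc hR
  obtain ⟨xb, hxb, hmin⟩ := (isCompact_of_isClosed_isBounded hS0cl hS₀bdd).exists_isMinOn
    ⟨x₀, hx₀⟩ (hφcont.mono fun x hx => hx.1)
  obtain ⟨g, hgΩ, hgS₀⟩ := exists_subgradient_of_isMinOn_of_zero_mem_intrinsicInterior hconv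
    (convex_viSolutionSet hconv hFcont hFmono) (fun x hx => hx.1) hφconv hφcont hxb hmin
    (fun _ hx => (Set.Nonempty.some_mem hx).1) hri hriS0
  have hGxb : dualGap Ω F xb = 0 :=
    dualGap_eq_zero_of_mem_mintySolutionSet (viSolutionSet_subset_mintySolutionSet hFmono hxb)
  have hbound : ∀ ε : ℝ, 0 < ε → ∀ xe ∈ {x | x ∈ Ω ∧ ∀ z ∈ Ω,
      dualGap Ω F x + ((ε * φ x : ℝ) : EReal) ≤ dualGap Ω F z + ((ε * φ z : ℝ) : EReal)},
      infDist xe (viSolutionSet Ω F) ^ (γ - 1) ≤ ‖g‖ / α * ε := by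
    rintro ε hε xe ⟨hxe, hxemin⟩
    refine rpow_sub_one_le_of_mul_rpow_le hα hγ infDist_nonneg (norm_nonneg g) hε.le ?_
    have hreg : α * infDist xe (viSolutionSet Ω F) ^ γ + ε * φ xe ≤ ε * φ xb := by
      have := (add_le_add_left (hsharp xe hxe) _).trans (hxemin xb hxb.1)
      rwa [hGxb, zero_add, ← EReal.coe_add, EReal.coe_le_coe_iff] at this
    have hφ : φ xb - φ xe ≤ ‖g‖ * infDist xe (viSolutionSet Ω F) :=
      sub_le_norm_mul_infDist hS0cl ⟨x₀, hx₀⟩ (hgΩ xe hxe) hgS₀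
    linarith [mul_le_mul_of_nonneg_left hφ hε.le]
  refine ⟨⟨‖g‖ / α + 1, by positivity, fun ε hε xe hxe => (hbound ε hε xe hxe).trans ?_⟩,
    fun ε hε => isBounded_of_forall_infDist_rpow_le hS₀bdd ⟨x₀, hx₀⟩ (by linarith) (hbound ε hε)⟩
  gcongr
  linarith

/-- if S₀ is weakly sharp of order γ > 1 with sharpness constant
α > 0, then there is τ > 0 with d(x_ε, S₀)^(γ−1) ≤ τ ε for all ε > 0 and all
x_ε ∈ S_{Gεφ}; in particular S_{Gεφ} is bounded for each ε > 0. -/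
theorem error_bound_for_regularized_dual_gap {n : ℕ}
    (Ω : Set (EuclideanSpace ℝ (Fin n)))
    (hne : Ω.Nonempty) (hcl : IsClosed Ω) (hconv : Convex ℝ Ω)
    (F : EuclideanSpace ℝ (Fin n) → EuclideanSpace ℝ (Fin n))
    (hFcont : ContinuousOn F Ω)
    (hFmono : ∀ x ∈ Ω, ∀ y ∈ Ω, 0 ≤ ⟪F x - F y, x - y⟫_ℝ)
    (hcoer : ∃ γ' : ℝ, 0 < γ' ∧ ∀ x₀ ∈ Ω, ∃ c : ℝ, 0 < c ∧ ∃ R : ℝ,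
      ∀ x ∈ Ω, R ≤ ‖x‖ → c ≤ ⟪F x, x - x₀⟫_ℝ / ‖x‖ ^ γ')
    (φ : EuclideanSpace ℝ (Fin n) → ℝ)
    (hφconv : ConvexOn ℝ Ω φ) (hφcont : ContinuousOn φ Ω)
    (hri : (0 : EuclideanSpace ℝ (Fin n)) ∈
      intrinsicInterior ℝ ({x | (subdiffOn Ω φ x).Nonempty} - Ω))
    (hS0ne : ({x | x ∈ Ω ∧ ∀ y ∈ Ω, 0 ≤ ⟪F x, y - x⟫_ℝ}).Nonempty)
    (hS0cl : IsClosed {x : (EuclideanSpace ℝ (Fin n)) |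
      x ∈ Ω ∧ ∀ y ∈ Ω, 0 ≤ ⟪F x, y - x⟫_ℝ})
    (hriS0 : (0 : EuclideanSpace ℝ (Fin n)) ∈
      intrinsicInterior ℝ ({x | (subdiffOn Ω φ x).Nonempty} -
        {x | x ∈ Ω ∧ ∀ y ∈ Ω, 0 ≤ ⟪F x, y - x⟫_ℝ}))
    (γ α : ℝ) (hγ : 1 < γ) (hα : 0 < α)
    -- weak sharpness of order γ: G(x) ≥ α d(x, S₀)^γ on Ω
    (hsharp : ∀ x ∈ Ω,
      ((α * Metric.infDist x {x | x ∈ Ω ∧ ∀ y ∈ Ω, 0 ≤ ⟪F x, y - x⟫_ℝ} ^ γ : ℝ) :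
        EReal) ≤ dualGap Ω F x) :
    (∃ τ : ℝ, 0 < τ ∧ ∀ ε : ℝ, 0 < ε →
      ∀ xe ∈ {x | x ∈ Ω ∧ ∀ z ∈ Ω, dualGap Ω F x + ((ε * φ x : ℝ) : EReal) ≤
          dualGap Ω F z + ((ε * φ z : ℝ) : EReal)},
        Metric.infDist xe {x | x ∈ Ω ∧ ∀ y ∈ Ω, 0 ≤ ⟪F x, y - x⟫_ℝ} ^ (γ - 1)
          ≤ τ * ε) ∧
    (∀ ε : ℝ, 0 < ε →
      Bornology.IsBounded
        {x | x ∈ Ω ∧ ∀ z ∈ Ω, dualGap Ω F x + ((ε * φ x : ℝ) : EReal) ≤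
          dualGap Ω F z + ((ε * φ z : ℝ) : EReal)}) :=
  error_bound_for_regularized_dual_gap_general Ω hconv F hFcont hFmono hcoer φ hφconv hφcont hri
    hS0ne hS0cl hriS0 γ α hγ hα hsharp
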